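/- arXiv:1403.3173 — 3 statements merged into one kernel-verified Lean document; each statement's English description precedes it below -/
import Mathlib

section
/- Assume E(|u|²) < ∞ μ-a.e. Then the following are equivalent: (a) D(EM_u) = {f ∈ L²(μ) : ū·(P f) ∈ L²(μ)} and ∫_X |EM_u f|² dμ = ∫_X |u|²·|P f|² dμ for every f ∈ D(EM_u) (i.e., the closed densely defined operator EM_u is normal, ‖(EM_u) f‖ = ‖(EM_u)* f‖ on the common domain); (b) u is μ-a.e. equal to an 𝒜-measurable function. -/
open MeasureTheory Filter ENNReal NNReal

noncomputable section

variable {X : Type*}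

/-- A set `A` in the sub-σ-algebra `m` is *admissible* for the weight `u` if
`μ A + ∫_A |u|² dμ < ∞`. -/
def Admissible (m : MeasurableSpace X) [m0 : MeasurableSpace X] (μ : Measure X)
    (u : X → ℂ) (A : Set X) : Prop :=
  MeasurableSet[m] A ∧ μ A + ∫⁻ x in A, (‖u x‖₊ : ℝ≥0∞) ^ 2 ∂μ < ⊤

/-- `gf` is a version of `E(u·f)`, i.e. `gf` is an `m`-measurable function in `L²(μ)` with
`∫_A u·f dμ = ∫_A gf dμ` for every admissible `A`.  `f ∈ D(EM_u)` iff `f ∈ L²(μ)` and such a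
`gf` exists. -/
def IsWCE (m : MeasurableSpace X) [m0 : MeasurableSpace X] (μ : Measure X)
    (u f gf : X → ℂ) : Prop :=
  StronglyMeasurable[m] gf ∧ MemLp gf 2 μ ∧
    ∀ A : Set X, Admissible m μ u A → ∫ x in A, u x * f x ∂μ = ∫ x in A, gf x ∂μ

/-!
Both directions run over a countable cover of `X` by admissible sets
`Aₙ = Sₙ ∩ {E(|u|²) ≤ n}`, with `Sₙ` spanning sets of `μ` on `𝒜`. Every `𝒜`-measurable subset of
an admissible set is admissible, so a function in `L²` is determined a.e. by its integrals over
admissible sets; in particular `E(uf)` is unique.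

If `u = v` a.e. with `v` `𝒜`-measurable, then for admissible `A` the function `1_A v̄` lies in the
range of `P`, so `∫_A u f = ⟪1_A v̄, f⟫ = ⟪1_A v̄, P f⟫ = ∫_A v · P f`. Hence `E(uf) = v · P f`,
which gives both the domain and the norm identity.

Conversely, let `A` be admissible and `χ = 1_A`. Then `P χ = χ`, and any version of `P(u χ)` is a
version of `E(u χ)`, so the norm identity for `χ` reads `‖P(u χ)‖ = ‖u χ‖`. An orthogonal
projection preserves exactly the norms of the vectors in its range, so `u χ` is `𝒜`-measurable;
gluing over the cover shows that `u` is.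
-/

open scoped ComplexConjugate

namespace MeasureTheory

variable {α : Type*} {m m0 : MeasurableSpace α} {μ : Measure α}

lemma eLpNorm_two_sq {E : Type*} [NormedAddCommGroup E] (f : α → E) :
    eLpNorm f 2 μ ^ 2 = ∫⁻ x, (‖f x‖₊ : ℝ≥0∞) ^ 2 ∂μ := by
  simpa [enorm_eq_nnnorm] using
    eLpNorm_nnreal_pow_eq_lintegral (f := f) (μ := μ) (p := 2) two_ne_zero

lemma memLp_two_of_lintegral_sq_lt_top {E : Type*} [NormedAddCommGroup E] {f : α → E}
    (hf : AEStronglyMeasurable f μ) (h : ∫⁻ x, (‖f x‖₊ : ℝ≥0∞) ^ 2 ∂μ < ∞) : MemLp f 2 μ :=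
  ⟨hf, lt_of_pow_lt_pow_left' 2 (by rwa [eLpNorm_two_sq, ENNReal.top_pow two_ne_zero])⟩

lemma Lp.norm_eq_norm_of_lintegral_sq_eq {E : Type*} [NormedAddCommGroup E] {f g : Lp E 2 μ}
    (h : ∫⁻ x, (‖f x‖₊ : ℝ≥0∞) ^ 2 ∂μ = ∫⁻ x, (‖g x‖₊ : ℝ≥0∞) ^ 2 ∂μ) : ‖f‖ = ‖g‖ := by
  rw [Lp.norm_def, Lp.norm_def, (ENNReal.pow_right_strictMono two_ne_zero).injective
    (by simpa only [eLpNorm_two_sq] using h : eLpNorm f 2 μ ^ 2 = eLpNorm g 2 μ ^ 2)]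

lemma norm_condExpL2_eq_norm_iff {𝕜 E : Type*} [RCLike 𝕜] [NormedAddCommGroup E]
    [InnerProductSpace 𝕜 E] [CompleteSpace E] (hm : m ≤ m0) (f : Lp E 2 μ) :
    ‖(condExpL2 E 𝕜 hm f : Lp E 2 μ)‖ = ‖f‖ ↔ AEStronglyMeasurable[m] f μ := by
  have : Fact (m ≤ m0) := ⟨hm⟩
  rw [← mem_lpMeas_iff_aestronglyMeasurable (𝕜 := 𝕜), Submodule.mem_iff_norm_starProjection]
  rfl

lemma integral_mul_condExpL2 {𝕜 : Type*} [RCLike 𝕜] (hm : m ≤ m0) {h : α → 𝕜}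
    (hhm : StronglyMeasurable[m] h) (hh : MemLp h 2 μ) (f : Lp 𝕜 2 μ) :
    ∫ x, h x * (condExpL2 𝕜 𝕜 hm f : Lp 𝕜 2 μ) x ∂μ = ∫ x, h x * f x ∂μ := by
  set H := hh.star.toLp _
  have hHm : AEStronglyMeasurable[m] H μ :=
    ⟨_, RCLike.continuous_conj.comp_stronglyMeasurable hhm, hh.star.coeFn_toLp⟩
  have hinner : ∀ F : Lp 𝕜 2 μ, inner 𝕜 H F = ∫ x, h x * F x ∂μ := fun F => by
    rw [L2.inner_def]
    refine integral_congr_ae ?_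
    filter_upwards [hh.star.coeFn_toLp] with x hx
    rw [RCLike.inner_apply, hx, Pi.star_apply, RCLike.star_def, RCLike.conj_conj, mul_comm]
  rw [← hinner, ← hinner, ← inner_conj_symm, inner_condExpL2_eq_inner_fun hm f H hHm,
    inner_conj_symm]

lemma exists_measurable_ae_eq_of_ae_cover {β : Type*} [MeasurableSpace β] {f : α → β}
    {s : ℕ → Set α} (hs : ∀ n, MeasurableSet[m] (s n)) (hcov : ∀ᵐ x ∂μ, ∃ n, x ∈ s n)
    {g : ℕ → α → β} (hg : ∀ n, Measurable[m] (g n)) (hfg : ∀ n, ∀ᵐ x ∂μ, x ∈ s n → f x = g n x) :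
    ∃ f' : α → β, Measurable[m] f' ∧ f =ᵐ[μ] f' := by
  classical
  -- outside `⋃ n, s n` any index will do, so enlarge each piece by that set
  have hcover : ∀ x, ∃ n, x ∈ s n ∨ x ∉ ⋃ k, s k := fun x => by
    by_cases hx : x ∈ ⋃ k, s k
    · obtain ⟨k, hk⟩ := Set.mem_iUnion.mp hx
      exact ⟨k, Or.inl hk⟩
    · exact ⟨0, Or.inr hx⟩
  refine ⟨fun x => g (Nat.find (hcover x)) x, ?_, ?_⟩
  · let _ : MeasurableSpace α := m
    exact Measurable.find (p := fun n x => x ∈ s n ∨ x ∉ ⋃ k, s k) hg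
      (fun n => (hs n).union (MeasurableSet.iUnion hs).compl) hcover
  · filter_upwards [hcov, ae_all_iff.mpr hfg] with x ⟨n, hn⟩ hfgx
    refine hfgx _ ((Nat.find_spec (hcover x)).resolve_right ?_)
    exact not_not.mpr (Set.mem_iUnion.mpr ⟨n, hn⟩)

lemma ae_eq_of_forall_setIntegral_eq_of_cover {E : Type*} [NormedAddCommGroup E]
    [NormedSpace ℝ E] [CompleteSpace E] (hm : m ≤ m0) {s : ℕ → Set α}
    (hs : ∀ n, MeasurableSet[m] (s n)) (hμs : ∀ n, μ (s n) < ∞) (hcov : ∀ᵐ x ∂μ, ∃ n, x ∈ s n)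
    {f g : α → E} (hfm : AEStronglyMeasurable[m] f μ) (hgm : AEStronglyMeasurable[m] g μ)
    (hf : ∀ n, IntegrableOn f (s n) μ) (hg : ∀ n, IntegrableOn g (s n) μ)
    (hfg : ∀ n t, MeasurableSet[m] t → t ⊆ s n → ∫ x in t, f x ∂μ = ∫ x in t, g x ∂μ) :
    f =ᵐ[μ] g := by
  have hrestrict : ∀ n, f =ᵐ[μ.restrict (s n)] g := fun n => by
    have : IsFiniteMeasure (μ.restrict (s n)) := isFiniteMeasure_restrict.mpr (hμs n).ne
    have := isFiniteMeasure_trim (μ := μ.restrict (s n)) hm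
    refine ae_eq_of_forall_setIntegral_eq_of_sigmaFinite' hm
      (fun t _ _ => (hf n).integrable.restrict) (fun t _ _ => (hg n).integrable.restrict)
      (fun t ht _ => ?_) hfm.restrict hgm.restrict
    rw [Measure.restrict_restrict (hm t ht)]
    exact hfg n _ (ht.inter (hs n)) Set.inter_subset_right
  have hcov' : ∀ᵐ x ∂μ, x ∈ ⋃ n, s n := hcov.mono fun x hx => Set.mem_iUnion.mpr hx
  rw [EventuallyEq, ← Measure.restrict_eq_self_of_ae_mem hcov', ae_restrict_iUnion_iff]
  exact hrestrict

lemma MemLp.integrableOn_of_measure_lt_top {E : Type*} [NormedAddCommGroup E] {p : ℝ≥0∞}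
    {f : α → E} (hf : MemLp f p μ) (hp : 1 ≤ p) {s : Set α} (hs : μ s < ∞) :
    IntegrableOn f s μ :=
  have : IsFiniteMeasure (μ.restrict s) := isFiniteMeasure_restrict.mpr hs.ne
  (hf.restrict s).integrable hp

end MeasureTheory

namespace Admissible

variable {m : MeasurableSpace X} [m0 : MeasurableSpace X] {μ : Measure X} {u : X → ℂ}
  {A B : Set X}

lemma measure_lt_top (hA : Admissible m μ u A) : μ A < ∞ :=
  le_self_add.trans_lt hA.2

lemma lintegral_lt_top (hA : Admissible m μ u A) :
    ∫⁻ x in A, (‖u x‖₊ : ℝ≥0∞) ^ 2 ∂μ < ∞ :=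
  le_add_self.trans_lt hA.2

lemma mono (hA : Admissible m μ u A) (hB : MeasurableSet[m] B) (hBA : B ⊆ A) :
    Admissible m μ u B :=
  ⟨hB, (add_le_add (measure_mono hBA) (lintegral_mono_set hBA)).trans_lt hA.2⟩

lemma memLp_restrict (hu : AEStronglyMeasurable u μ) (hA : Admissible m μ u A) :
    MemLp u 2 (μ.restrict A) :=
  memLp_two_of_lintegral_sq_lt_top hu.restrict hA.lintegral_lt_top

lemma memLp_indicator (hm : m ≤ m0) (hu : AEStronglyMeasurable u μ)
    (hA : Admissible m μ u A) : MemLp (A.indicator u) 2 μ :=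
  (memLp_indicator_iff_restrict (hm _ hA.1)).mpr (hA.memLp_restrict hu)

lemma integrableOn_mul (hu : AEStronglyMeasurable u μ) (hA : Admissible m μ u A) {f : X → ℂ}
    (hf : MemLp f 2 μ) : IntegrableOn (fun x => u x * f x) A μ :=
  (hA.memLp_restrict hu).integrable_mul (hf.restrict A)

end Admissible

section WeightedConditionalExpectation

variable {m : MeasurableSpace X} [m0 : MeasurableSpace X] {μ : Measure X} {u : X → ℂ}

lemma exists_admissible_cover (hm : m ≤ m0) [SigmaFinite (μ.trim hm)] {g : X → ℝ≥0∞}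
    (hgm : Measurable[m] g)
    (hg : ∀ A : Set X, MeasurableSet[m] A →
      ∫⁻ x in A, (‖u x‖₊ : ℝ≥0∞) ^ 2 ∂μ = ∫⁻ x in A, g x ∂μ)
    (hgfin : ∀ᵐ x ∂μ, g x < ∞) :
    ∃ A : ℕ → Set X, (∀ n, Admissible m μ u (A n)) ∧ ∀ᵐ x ∂μ, ∃ n, x ∈ A n := by
  set S := spanningSets (μ.trim hm)
  refine ⟨fun n => S n ∩ {x | g x ≤ n}, fun n => ?_, ?_⟩
  · have hAm : MeasurableSet[m] (S n ∩ {x | g x ≤ n}) :=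
      (measurableSet_spanningSets _ n).inter (hgm measurableSet_Iic)
    have hμ : μ (S n ∩ {x | g x ≤ n}) < ∞ := by
      refine (measure_mono Set.inter_subset_left).trans_lt ?_
      rw [← trim_measurableSet_eq hm (measurableSet_spanningSets _ n)]
      exact measure_spanningSets_lt_top _ n
    refine ⟨hAm, ENNReal.add_lt_top.mpr ⟨hμ, ?_⟩⟩
    calc ∫⁻ x in S n ∩ {x | g x ≤ n}, (‖u x‖₊ : ℝ≥0∞) ^ 2 ∂μ
        = ∫⁻ x in S n ∩ {x | g x ≤ n}, g x ∂μ := hg _ hAm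
      _ ≤ ∫⁻ _ in S n ∩ {x | g x ≤ n}, (n : ℝ≥0∞) ∂μ :=
          setLIntegral_mono measurable_const fun x hx => hx.2
      _ = n * μ (S n ∩ {x | g x ≤ n}) := setLIntegral_const _ _
      _ < ∞ := ENNReal.mul_lt_top (natCast_lt_top n) hμ
  · filter_upwards [hgfin] with x hx
    obtain ⟨k, hk⟩ := Set.mem_iUnion.mp (iUnion_spanningSets (μ.trim hm) ▸ Set.mem_univ x)
    obtain ⟨j, hj⟩ := ENNReal.exists_nat_gt hx.ne
    exact ⟨max k j, monotone_spanningSets _ (le_max_left k j) hk,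
      hj.le.trans (by exact_mod_cast le_max_right k j)⟩

lemma isWCE_of_condExpL2_ae_eq (hm : m ≤ m0) {f : X → ℂ} {F : Lp ℂ 2 μ}
    (hF : ⇑F =ᵐ[μ] fun x => u x * f x) {w : X → ℂ} (hwm : StronglyMeasurable[m] w)
    (hw : ⇑(condExpL2 ℂ ℂ hm F : Lp ℂ 2 μ) =ᵐ[μ] w) : IsWCE m μ u f w :=
  ⟨hwm, (Lp.memLp _).ae_eq hw, fun B hB => calc
    ∫ x in B, u x * f x ∂μ = ∫ x in B, F x ∂μ := integral_congr_ae (ae_restrict_of_ae hF.symm)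
    _ = ∫ x in B, (condExpL2 ℂ ℂ hm F : Lp ℂ 2 μ) x ∂μ :=
        (integral_condExpL2_eq hm F hB.1 hB.measure_lt_top.ne).symm
    _ = ∫ x in B, w x ∂μ := integral_congr_ae (ae_restrict_of_ae hw)⟩

lemma Admissible.aestronglyMeasurable_indicator (hm : m ≤ m0) (hu : AEStronglyMeasurable u μ)
    {A : Set X} (hA : Admissible m μ u A)
    (hnorm : ∀ gf : X → ℂ,
      IsWCE m μ u (indicatorConstLp 2 (hm _ hA.1) hA.measure_lt_top.ne (1 : ℂ)) gf →
        ∫⁻ x, (‖gf x‖₊ : ℝ≥0∞) ^ 2 ∂μ =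
          ∫⁻ x, (‖u x‖₊ : ℝ≥0∞) ^ 2 * (‖(condExpL2 ℂ ℂ hm
            (indicatorConstLp 2 (hm _ hA.1) hA.measure_lt_top.ne (1 : ℂ)) : Lp ℂ 2 μ) x‖₊
              : ℝ≥0∞) ^ 2 ∂μ) :
    AEStronglyMeasurable[m] (A.indicator u) μ := by
  set χ := indicatorConstLp 2 (hm _ hA.1) hA.measure_lt_top.ne (1 : ℂ)
  have hW := hA.memLp_indicator hm hu
  set W := hW.toLp _
  obtain ⟨w, hwm, hw⟩ := aestronglyMeasurable_condExpL2 (𝕜 := ℂ) hm W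
  have hWχ : ⇑W =ᵐ[μ] fun x => u x * χ x := by
    filter_upwards [hW.coeFn_toLp,
      (indicatorConstLp_coeFn : ⇑χ =ᵐ[μ] A.indicator fun _ => (1 : ℂ))] with x hWx hχx
    by_cases hx : x ∈ A <;> simp [W, χ, hWx, hχx, hx]
  have hnormW : ‖(condExpL2 ℂ ℂ hm W : Lp ℂ 2 μ)‖ = ‖W‖ := by
    refine Lp.norm_eq_norm_of_lintegral_sq_eq ?_
    calc ∫⁻ x, (‖(condExpL2 ℂ ℂ hm W : Lp ℂ 2 μ) x‖₊ : ℝ≥0∞) ^ 2 ∂μ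
        = ∫⁻ x, (‖w x‖₊ : ℝ≥0∞) ^ 2 ∂μ := lintegral_congr_ae (hw.mono fun x hx => by simp only [hx])
      _ = ∫⁻ x, (‖u x‖₊ : ℝ≥0∞) ^ 2 * (‖χ x‖₊ : ℝ≥0∞) ^ 2 ∂μ := by
          rw [hnorm w (isWCE_of_condExpL2_ae_eq hm hWχ hwm hw),
            condExpL2_indicator_of_measurable hm hA.1]
      _ = ∫⁻ x, (‖W x‖₊ : ℝ≥0∞) ^ 2 ∂μ :=
          lintegral_congr_ae (hWχ.mono fun x hx => by simp [hx, mul_pow])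
  exact ((norm_condExpL2_eq_norm_iff hm W).mp hnormW).congr hW.coeFn_toLp

variable {A : ℕ → Set X}

lemma aestronglyMeasurable_of_forall_lintegral_sq_eq (hm : m ≤ m0)
    (hu : AEStronglyMeasurable u μ) (hA : ∀ n, Admissible m μ u (A n))
    (hcov : ∀ᵐ x ∂μ, ∃ n, x ∈ A n)
    (hnorm : ∀ (f : Lp ℂ 2 μ) (gf : X → ℂ), IsWCE m μ u (f : X → ℂ) gf →
      ∫⁻ x, (‖gf x‖₊ : ℝ≥0∞) ^ 2 ∂μ =
        ∫⁻ x, (‖u x‖₊ : ℝ≥0∞) ^ 2 *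
          (‖(↑(condExpL2 ℂ ℂ hm f) : Lp ℂ 2 μ) x‖₊ : ℝ≥0∞) ^ 2 ∂μ) :
    AEStronglyMeasurable[m] u μ := by
  choose w hwm hw using fun n => (hA n).aestronglyMeasurable_indicator hm hu (hnorm _)
  obtain ⟨v, hvm, hv⟩ := exists_measurable_ae_eq_of_ae_cover (fun n => (hA n).1) hcov
    (fun n => (hwm n).measurable)
    fun n => (hw n).mono fun x hx hxA => by rw [← hx, Set.indicator_of_mem hxA]
  exact ⟨v, hvm.stronglyMeasurable, hv⟩

variable {v : X → ℂ}

lemma IsWCE.ae_eq (hm : m ≤ m0) (hA : ∀ n, Admissible m μ u (A n))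
    (hcov : ∀ᵐ x ∂μ, ∃ n, x ∈ A n) {f gf ψ : X → ℂ} (hgf : IsWCE m μ u f gf)
    (hψm : AEStronglyMeasurable[m] ψ μ) (hψ : ∀ n, IntegrableOn ψ (A n) μ)
    (hfψ : ∀ B, Admissible m μ u B → ∫ x in B, u x * f x ∂μ = ∫ x in B, ψ x ∂μ) :
    gf =ᵐ[μ] ψ :=
  ae_eq_of_forall_setIntegral_eq_of_cover hm (fun n => (hA n).1)
    (fun n => (hA n).measure_lt_top) hcov hgf.1.aestronglyMeasurable hψm
    (fun n => MemLp.integrableOn_of_measure_lt_top hgf.2.1 one_le_two (hA n).measure_lt_top) hψ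
    fun n t ht htA => by
      have hadm := (hA n).mono ht htA
      rw [← hgf.2.2 t hadm, hfψ t hadm]

lemma Admissible.setIntegral_mul_eq_setIntegral_mul_condExpL2 (hm : m ≤ m0)
    (hvm : StronglyMeasurable[m] v) (hv : u =ᵐ[μ] v) {B : Set X} (hB : Admissible m μ u B)
    (f : Lp ℂ 2 μ) :
    ∫ x in B, u x * f x ∂μ = ∫ x in B, v x * (condExpL2 ℂ ℂ hm f : Lp ℂ 2 μ) x ∂μ := by
  have hvB : MemLp (B.indicator v) 2 μ :=
    (hB.memLp_indicator hm ((hvm.mono hm).aestronglyMeasurable.congr hv.symm)).ae_eq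
      hv.indicator
  have hindicator : ∀ F : X → ℂ, ∫ x in B, v x * F x ∂μ = ∫ x, B.indicator v x * F x ∂μ :=
    fun F => by simp_rw [← integral_indicator (hm _ hB.1), Set.indicator_mul_left]
  rw [integral_congr_ae (ae_restrict_of_ae (hv.mono fun x hx => by rw [hx])), hindicator,
    hindicator, integral_mul_condExpL2 hm (hvm.indicator hB.1) hvB]

lemma isWCE_iff (hm : m ≤ m0) (hA : ∀ n, Admissible m μ u (A n))
    (hcov : ∀ᵐ x ∂μ, ∃ n, x ∈ A n) (hvm : StronglyMeasurable[m] v) (hv : u =ᵐ[μ] v)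
    (f : Lp ℂ 2 μ) {φ : X → ℂ} (hφm : StronglyMeasurable[m] φ)
    (hφ : ⇑(condExpL2 ℂ ℂ hm f : Lp ℂ 2 μ) =ᵐ[μ] φ) {gf : X → ℂ} :
    IsWCE m μ u f gf ↔
      StronglyMeasurable[m] gf ∧ MemLp gf 2 μ ∧ gf =ᵐ[μ] fun x => v x * φ x := by
  have hu : AEStronglyMeasurable u μ := (hvm.mono hm).aestronglyMeasurable.congr hv.symm
  have hint : ∀ B, Admissible m μ u B → ∫ x in B, u x * f x ∂μ = ∫ x in B, v x * φ x ∂μ :=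
    fun B hB => (hB.setIntegral_mul_eq_setIntegral_mul_condExpL2 hm hvm hv f).trans
      (integral_congr_ae (ae_restrict_of_ae (hφ.mono fun x hx => by simp only [hx])))
  have hvφ : ∀ n, IntegrableOn (fun x => v x * φ x) (A n) μ := fun n =>
    ((hA n).integrableOn_mul hu ((Lp.memLp _).ae_eq hφ)).congr
      (ae_restrict_of_ae (hv.mono fun x hx => by simp only [hx]))
  refine ⟨fun hgf => ⟨hgf.1, hgf.2.1,
    hgf.ae_eq hm hA hcov (hvm.mul hφm).aestronglyMeasurable hvφ hint⟩, ?_⟩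
  rintro ⟨hgm, hgf, hae⟩
  exact ⟨hgm, hgf, fun B hB => (hint B hB).trans (integral_congr_ae (ae_restrict_of_ae hae.symm))⟩

lemma exists_isWCE_iff_memLp (hm : m ≤ m0) (hA : ∀ n, Admissible m μ u (A n))
    (hcov : ∀ᵐ x ∂μ, ∃ n, x ∈ A n) (hvm : StronglyMeasurable[m] v) (hv : u =ᵐ[μ] v)
    (f : Lp ℂ 2 μ) :
    (∃ gf : X → ℂ, IsWCE m μ u f gf) ↔
      MemLp (fun x => conj (u x) * (condExpL2 ℂ ℂ hm f : Lp ℂ 2 μ) x) 2 μ := by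
  obtain ⟨φ, hφm, hφ⟩ := aestronglyMeasurable_condExpL2 (𝕜 := ℂ) hm f
  have hnorm : ∀ᵐ x ∂μ,
      ‖v x * φ x‖ = ‖conj (u x) * (condExpL2 ℂ ℂ hm f : Lp ℂ 2 μ) x‖ := by
    filter_upwards [hv, hφ] with x hvx hφx
    rw [norm_mul, norm_mul, RCLike.norm_conj, hvx, hφx]
  simp_rw [isWCE_iff hm hA hcov hvm hv f hφm hφ]
  constructor
  · rintro ⟨gf, -, hgf, hae⟩
    exact (hgf.ae_eq hae).congr_norm
      ((((hvm.mono hm).aestronglyMeasurable.congr hv.symm).star).mul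
        (Lp.aestronglyMeasurable _)) hnorm
  · intro hmem
    exact ⟨_, hvm.mul hφm,
      hmem.congr_norm ((hvm.mul hφm).mono hm).aestronglyMeasurable (hnorm.mono fun x hx => hx.symm),
      EventuallyEq.rfl⟩

lemma IsWCE.lintegral_sq_eq (hm : m ≤ m0) (hA : ∀ n, Admissible m μ u (A n))
    (hcov : ∀ᵐ x ∂μ, ∃ n, x ∈ A n) (hvm : StronglyMeasurable[m] v) (hv : u =ᵐ[μ] v)
    {f : Lp ℂ 2 μ} {gf : X → ℂ} (hgf : IsWCE m μ u f gf) :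
    ∫⁻ x, (‖gf x‖₊ : ℝ≥0∞) ^ 2 ∂μ =
      ∫⁻ x, (‖u x‖₊ : ℝ≥0∞) ^ 2 * (‖(condExpL2 ℂ ℂ hm f : Lp ℂ 2 μ) x‖₊ : ℝ≥0∞) ^ 2 ∂μ := by
  obtain ⟨φ, hφm, hφ⟩ := aestronglyMeasurable_condExpL2 (𝕜 := ℂ) hm f
  obtain ⟨-, -, hae⟩ := (isWCE_iff hm hA hcov hvm hv f hφm hφ).mp hgf
  refine lintegral_congr_ae ?_
  filter_upwards [hae, hv, hφ] with x hgfx hvx hφx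
  rw [hgfx, hvx, hφx, nnnorm_mul, ENNReal.coe_mul, mul_pow]

end WeightedConditionalExpectation

theorem stmt7_general (m : MeasurableSpace X) [m0 : MeasurableSpace X] (hm : m ≤ m0)
    (μ : Measure X) [SigmaFinite (μ.trim hm)]
    (u : X → ℂ) (hu : Measurable u)
    (g : X → ℝ≥0∞) (hgm : Measurable[m] g)
    (hg : ∀ A : Set X, MeasurableSet[m] A →
      ∫⁻ x in A, (‖u x‖₊ : ℝ≥0∞) ^ 2 ∂μ = ∫⁻ x in A, g x ∂μ)
    (hgfin : ∀ᵐ x ∂μ, g x < ⊤) :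
    ((∀ f : Lp ℂ 2 μ,
        ((∃ gf : X → ℂ, IsWCE m μ u (f : X → ℂ) gf) ↔
          MemLp (fun x => (starRingEnd ℂ) (u x) * (↑(condExpL2 ℂ ℂ hm f) : Lp ℂ 2 μ) x) 2 μ)) ∧
      (∀ (f : Lp ℂ 2 μ) (gf : X → ℂ), IsWCE m μ u (f : X → ℂ) gf →
        ∫⁻ x, (‖gf x‖₊ : ℝ≥0∞) ^ 2 ∂μ =
          ∫⁻ x, (‖u x‖₊ : ℝ≥0∞) ^ 2 *
            (‖(↑(condExpL2 ℂ ℂ hm f) : Lp ℂ 2 μ) x‖₊ : ℝ≥0∞) ^ 2 ∂μ)) ↔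
    (∃ u' : X → ℂ, StronglyMeasurable[m] u' ∧ u =ᵐ[μ] u') := by
  obtain ⟨A, hA, hcov⟩ := exists_admissible_cover hm hgm hg hgfin
  constructor
  · exact fun h =>
      aestronglyMeasurable_of_forall_lintegral_sq_eq hm hu.aestronglyMeasurable hA hcov h.2
  · rintro ⟨v, hvm, hv⟩
    exact ⟨exists_isWCE_iff_memLp hm hA hcov hvm hv,
      fun f gf hgf => hgf.lintegral_sq_eq hm hA hcov hvm hv⟩

/-- With `E(|u|²) < ∞` a.e., `EM_u` is normal (its domain coincides with the
domain `{f : ū·(P f) ∈ L²}` of its adjoint and `‖EM_u f‖ = ‖(EM_u)* f‖` there) iff `u` is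
a.e. equal to an `m`-measurable function.  Here `P = condExpL2` is the orthogonal projection
onto the `m`-measurable elements of `L²(μ)`. -/
theorem stmt7 (m : MeasurableSpace X) [m0 : MeasurableSpace X] (hm : m ≤ m0)
    (μ : Measure X) [SigmaFinite μ] [SigmaFinite (μ.trim hm)]
    (u : X → ℂ) (hu : Measurable u)
    (g : X → ℝ≥0∞) (hgm : Measurable[m] g)
    (hg : ∀ A : Set X, MeasurableSet[m] A →
      ∫⁻ x in A, (‖u x‖₊ : ℝ≥0∞) ^ 2 ∂μ = ∫⁻ x in A, g x ∂μ)
    (hgfin : ∀ᵐ x ∂μ, g x < ⊤) :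
    ((∀ f : Lp ℂ 2 μ,
        ((∃ gf : X → ℂ, IsWCE m μ u (f : X → ℂ) gf) ↔
          MemLp (fun x => (starRingEnd ℂ) (u x) * (↑(condExpL2 ℂ ℂ hm f) : Lp ℂ 2 μ) x) 2 μ)) ∧
      (∀ (f : Lp ℂ 2 μ) (gf : X → ℂ), IsWCE m μ u (f : X → ℂ) gf →
        ∫⁻ x, (‖gf x‖₊ : ℝ≥0∞) ^ 2 ∂μ =
          ∫⁻ x, (‖u x‖₊ : ℝ≥0∞) ^ 2 *
            (‖(↑(condExpL2 ℂ ℂ hm f) : Lp ℂ 2 μ) x‖₊ : ℝ≥0∞) ^ 2 ∂μ)) ↔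
    (∃ u' : X → ℂ, StronglyMeasurable[m] u' ∧ u =ᵐ[μ] u') :=
  stmt7_general m (m0 := m0) hm μ u hu g hgm hg hgfin
end
end

section
/- Assume E(|u|²) < ∞ μ-a.e., set S = {x : E(|u|²)(x) > 0} and ũ = u·E(|u|²)^{-1/2}·χ_S. For every f ∈ D(EM_u), the function h := ū·E(|u|²)^{-1/2}·χ_S·(EM_u f) belongs to L²(μ) with ∫_X |h|² dμ = ∫_X |EM_u f|² dμ, h belongs to D(EM_{ũ}), and EM_{ũ} h = EM_u f μ-a.e. (This is the identity U(|EM_u| f) = EM_u f for the partial isometry U = EM_{ũ} in the polar decomposition of EM_u.) -/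
/-!
The heart of the matter is `E(|ũ|²) = χ_S`: the measures `|ũ|² dμ` and `χ_S dμ` agree on `𝒜`,
so they give the same integral to every `𝒜`-measurable function. Since `h = conj ũ · E(uf)` and
`E(uf)` vanishes a.e. off `S` (because `u` does), this yields
`∫ |h|² = ∫ χ_S |E(uf)|² = ∫ |E(uf)|²` and `∫_A ũ h = ∫_A |ũ|² E(uf) = ∫_A E(uf)` for `A ∈ 𝒜`.
-/

open MeasureTheory Filter ENNReal NNReal

noncomputable section

variable {X : Type*}

section DensityTransfer

variable {m : MeasurableSpace X} [m0 : MeasurableSpace X] {μ : Measure X} {w v : X → ℝ≥0∞}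

theorem trim_withDensity_eq_of_forall_setLIntegral_eq (hm : m ≤ m0)
    (h : ∀ A, MeasurableSet[m] A → ∫⁻ x in A, w x ∂μ = ∫⁻ x in A, v x ∂μ) :
    (μ.withDensity w).trim hm = (μ.withDensity v).trim hm := by
  refine @Measure.ext _ m _ _ fun A hA => ?_
  rw [trim_measurableSet_eq hm hA, trim_measurableSet_eq hm hA, withDensity_apply _ (hm A hA),
    withDensity_apply _ (hm A hA), h A hA]

theorem lintegral_mul_eq_of_forall_setLIntegral_eq (hm : m ≤ m0) (hw : Measurable w)
    (hv : Measurable v) (h : ∀ A, MeasurableSet[m] A → ∫⁻ x in A, w x ∂μ = ∫⁻ x in A, v x ∂μ)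
    {φ : X → ℝ≥0∞} (hφ : Measurable[m] φ) :
    ∫⁻ x, w x * φ x ∂μ = ∫⁻ x, v x * φ x ∂μ := by
  have hφ₀ : Measurable φ := hφ.mono hm le_rfl
  calc ∫⁻ x, w x * φ x ∂μ = ∫⁻ x, φ x ∂(μ.withDensity w).trim hm :=
        (lintegral_withDensity_eq_lintegral_mul μ hw hφ₀).symm.trans (lintegral_trim hm hφ).symm
    _ = ∫⁻ x, v x * φ x ∂μ := by
        rw [trim_withDensity_eq_of_forall_setLIntegral_eq hm h, lintegral_trim hm hφ,
          lintegral_withDensity_eq_lintegral_mul μ hv hφ₀]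
        rfl

theorem integral_toReal_smul_eq_of_forall_setLIntegral_eq {E : Type*} [NormedAddCommGroup E]
    [NormedSpace ℝ E] (hm : m ≤ m0) (hw : Measurable w) (hv : Measurable v)
    (hw_fin : ∀ᵐ x ∂μ, w x < ∞) (hv_fin : ∀ᵐ x ∂μ, v x < ∞)
    (h : ∀ A, MeasurableSet[m] A → ∫⁻ x in A, w x ∂μ = ∫⁻ x in A, v x ∂μ)
    {F : X → E} (hF : StronglyMeasurable[m] F) :
    ∫ x, (w x).toReal • F x ∂μ = ∫ x, (v x).toReal • F x ∂μ := by
  rw [← integral_withDensity_eq_integral_toReal_smul hw hw_fin,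
    ← integral_withDensity_eq_integral_toReal_smul hv hv_fin, integral_trim hm hF,
    integral_trim hm hF, trim_withDensity_eq_of_forall_setLIntegral_eq hm h]

end DensityTransfer

open ComplexConjugate

theorem eLpNorm_two_eq_of_lintegral_enorm_sq_eq {ε ε' : Type*} [ENorm ε] [ENorm ε']
    [MeasurableSpace X] {μ : Measure X} {F : X → ε} {G : X → ε'}
    (h : ∫⁻ x, ‖F x‖ₑ ^ 2 ∂μ = ∫⁻ x, ‖G x‖ₑ ^ 2 ∂μ) :
    eLpNorm F 2 μ = eLpNorm G 2 μ := by
  simp only [eLpNorm_eq_lintegral_rpow_enorm_toReal two_ne_zero ofNat_ne_top, toReal_ofNat,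
    ENNReal.rpow_two, h]

section ConditionalWeightIndicator

variable {m : MeasurableSpace X} [m0 : MeasurableSpace X] {μ : Measure X} {v G : X → ℂ}
  {T : Set X}

theorem lintegral_enorm_conj_mul_sq_eq (hm : m ≤ m0) (hv : Measurable v)
    (hT : MeasurableSet[m] T)
    (hvT : ∀ A, MeasurableSet[m] A → ∫⁻ x in A, ‖v x‖ₑ ^ 2 ∂μ = ∫⁻ x in A, T.indicator 1 x ∂μ)
    (hG : StronglyMeasurable[m] G) (hGT : ∀ᵐ x ∂μ, x ∉ T → G x = 0) :
    ∫⁻ x, ‖conj (v x) * G x‖ₑ ^ 2 ∂μ = ∫⁻ x, ‖G x‖ₑ ^ 2 ∂μ := by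
  calc ∫⁻ x, ‖conj (v x) * G x‖ₑ ^ 2 ∂μ = ∫⁻ x, ‖v x‖ₑ ^ 2 * ‖G x‖ₑ ^ 2 ∂μ := by
        simp only [enorm_mul, RCLike.enorm_conj, mul_pow]
    _ = ∫⁻ x, T.indicator 1 x * ‖G x‖ₑ ^ 2 ∂μ :=
        lintegral_mul_eq_of_forall_setLIntegral_eq hm (by fun_prop)
          (measurable_one.indicator (hm T hT)) hvT
          ((measurable_enorm.comp hG.measurable).pow_const 2)
    _ = ∫⁻ x, ‖G x‖ₑ ^ 2 ∂μ := lintegral_congr_ae <| by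
        filter_upwards [hGT] with x hx
        by_cases hxT : x ∈ T <;> simp [hxT, hx]

theorem setIntegral_mul_conj_mul_eq (hm : m ≤ m0) (hv : Measurable v)
    (hT : MeasurableSet[m] T)
    (hvT : ∀ A, MeasurableSet[m] A → ∫⁻ x in A, ‖v x‖ₑ ^ 2 ∂μ = ∫⁻ x in A, T.indicator 1 x ∂μ)
    (hG : StronglyMeasurable[m] G) (hGT : ∀ᵐ x ∂μ, x ∉ T → G x = 0)
    {A : Set X} (hA : MeasurableSet[m] A) :
    ∫ x in A, v x * (conj (v x) * G x) ∂μ = ∫ x in A, G x ∂μ := by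
  calc ∫ x in A, v x * (conj (v x) * G x) ∂μ
      = ∫ x, (‖v x‖ₑ ^ 2).toReal • A.indicator G x ∂μ := by
        rw [← integral_indicator (hm A hA)]
        congr 1 with x
        by_cases hxA : x ∈ A
        · simp [hxA, ← mul_assoc, Complex.mul_conj, Complex.normSq_eq_norm_sq, toReal_pow]
        · simp [hxA]
    _ = ∫ x, (T.indicator 1 x : ℝ≥0∞).toReal • A.indicator G x ∂μ :=
        integral_toReal_smul_eq_of_forall_setLIntegral_eq hm (by fun_prop)
          (measurable_one.indicator (hm T hT)) (.of_forall fun x => by simp [enorm_lt_top])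
          (.of_forall fun x => by by_cases hx : x ∈ T <;> simp [hx]) hvT (hG.indicator hA)
    _ = ∫ x in A, G x ∂μ := by
        rw [← integral_indicator (hm A hA)]
        refine integral_congr_ae ?_
        filter_upwards [hGT] with x hx
        by_cases hxT : x ∈ T <;> by_cases hxA : x ∈ A <;> simp [hxT, hxA, hx]

end ConditionalWeightIndicator

theorem IsWCE.ae_eq_zero_of_ae_eq_zero {m : MeasurableSpace X} [m0 : MeasurableSpace X]
    (hm : m ≤ m0) {μ : Measure X} [SigmaFinite (μ.trim hm)] {u f gf : X → ℂ} {T : Set X}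
    (hgf : IsWCE m μ u f gf) (hT : MeasurableSet[m] T) (huT : ∀ᵐ x ∂μ, x ∉ T → u x = 0) :
    ∀ᵐ x ∂μ, x ∉ T → gf x = 0 := by
  have hgf_int : ∀ A, MeasurableSet[m] A → μ A < ∞ → IntegrableOn (Tᶜ.indicator gf) A μ := by
    intro A _ hA_fin
    have : IsFiniteMeasure (μ.restrict A) := isFiniteMeasure_restrict.2 hA_fin.ne
    exact ((hgf.2.1.restrict A).integrable one_le_two).indicator (hm _ hT.compl)
  have hgf_zero : ∀ A, MeasurableSet[m] A → μ A < ∞ →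
      ∫ x in A, Tᶜ.indicator gf x ∂μ = ∫ x in A, (0 : X → ℂ) x ∂μ := by
    intro A hA hA_fin
    have hu_zero : ∫⁻ x in A ∩ Tᶜ, (‖u x‖₊ : ℝ≥0∞) ^ 2 ∂μ = 0 := by
      rw [setLIntegral_congr_fun_ae (g := fun _ => 0) (hm _ (hA.inter hT.compl))
        (huT.mono fun x hx hxA => by simp [hx hxA.2]), lintegral_zero]
    have hadm : Admissible m μ u (A ∩ Tᶜ) := ⟨hA.inter hT.compl, by
      rw [hu_zero, add_zero]; exact (measure_mono Set.inter_subset_left).trans_lt hA_fin⟩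
    rw [setIntegral_indicator (hm _ hT.compl), ← hgf.2.2 _ hadm,
      setIntegral_eq_zero_of_ae_eq_zero (huT.mono fun x hx hxA => by simp [hx hxA.2])]
    simp
  have hgf_ae : Tᶜ.indicator gf =ᵐ[μ] 0 :=
    ae_eq_of_forall_setIntegral_eq_of_sigmaFinite' hm hgf_int
      (fun _ _ _ => integrableOn_zero) hgf_zero
      (hgf.1.indicator hT.compl).aestronglyMeasurable stronglyMeasurable_zero.aestronglyMeasurable
  filter_upwards [hgf_ae] with x hx hxT
  simpa [Set.indicator_of_mem (Set.mem_compl hxT)] using hx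

/-- The weight `ũ = u·E(|u|²)^{-1/2}·χ_S`, for a version `g` of `E(|u|²)` and `S = {g > 0}`. -/
def polarWeight (u : X → ℂ) (g : X → ℝ≥0∞) : X → ℂ :=
  {x | 0 < g x}.indicator fun x => u x * (Real.sqrt (g x).toReal : ℂ)⁻¹

theorem enorm_inv_sqrt_toReal_sq {a : ℝ≥0∞} (ha : a ≠ 0) :
    ‖(Real.sqrt a.toReal : ℂ)⁻¹‖ₑ ^ 2 = a⁻¹ := by
  rcases eq_or_ne a ⊤ with rfl | ha_top
  · simp
  · rw [← ofReal_norm, norm_inv, Complex.norm_real, Real.norm_of_nonneg (Real.sqrt_nonneg _),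
      ← ofReal_pow (by positivity), inv_pow, Real.sq_sqrt toReal_nonneg,
      ofReal_inv_of_pos (toReal_pos ha ha_top), ofReal_toReal ha_top]

theorem enorm_polarWeight_sq (u : X → ℂ) (g : X → ℝ≥0∞) (x : X) :
    ‖polarWeight u g x‖ₑ ^ 2 = {x | 0 < g x}.indicator (fun x => ‖u x‖ₑ ^ 2 * (g x)⁻¹) x := by
  by_cases hx : 0 < g x
  · simp [polarWeight, hx, mul_pow, enorm_inv_sqrt_toReal_sq hx.ne']
  · simp [polarWeight, hx]

theorem measurable_polarWeight [MeasurableSpace X] {u : X → ℂ} {g : X → ℝ≥0∞}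
    (hu : Measurable u) (hg : Measurable g) : Measurable (polarWeight u g) :=
  (hu.mul (Complex.measurable_ofReal.comp
    (Real.continuous_sqrt.measurable.comp hg.ennreal_toReal)).inv).indicator
    (hg measurableSet_Ioi)

theorem indicator_conj_mul_eq_conj_polarWeight_mul (u F : X → ℂ) (g : X → ℝ≥0∞) :
    ({x | 0 < g x}.indicator fun x => conj (u x) * (Real.sqrt (g x).toReal : ℂ)⁻¹ * F x) =
      fun x => conj (polarWeight u g x) * F x := by
  ext x
  by_cases hx : 0 < g x <;> simp [polarWeight, hx]

section ConditionalWeight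

variable {m : MeasurableSpace X} [m0 : MeasurableSpace X] {μ : Measure X} {u : X → ℂ}
  {g : X → ℝ≥0∞}

theorem ae_eq_zero_of_forall_setLIntegral_enorm_sq_eq (hm : m ≤ m0) (hu : Measurable u)
    (hgm : Measurable[m] g)
    (hg : ∀ A, MeasurableSet[m] A → ∫⁻ x in A, ‖u x‖ₑ ^ 2 ∂μ = ∫⁻ x in A, g x ∂μ) :
    ∀ᵐ x ∂μ, x ∉ {x | 0 < g x} → u x = 0 := by
  have hSc : MeasurableSet[m] {x | 0 < g x}ᶜ := (hgm measurableSet_Ioi).compl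
  have hu_zero : ∫⁻ x in {x | 0 < g x}ᶜ, ‖u x‖ₑ ^ 2 ∂μ = 0 := by
    rw [hg _ hSc, setLIntegral_congr_fun_ae (g := fun _ => 0) (hm _ hSc)
      (.of_forall fun x hx => by simpa using hx), lintegral_zero]
  filter_upwards [(setLIntegral_eq_zero_iff (hm _ hSc) (by fun_prop)).1 hu_zero] with x hx hxS
  simpa using hx hxS

theorem setLIntegral_enorm_polarWeight_sq (hm : m ≤ m0) (hu : Measurable u)
    (hgm : Measurable[m] g)
    (hg : ∀ A, MeasurableSet[m] A → ∫⁻ x in A, ‖u x‖ₑ ^ 2 ∂μ = ∫⁻ x in A, g x ∂μ)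
    (hg_fin : ∀ᵐ x ∂μ, g x < ∞) :
    ∀ A, MeasurableSet[m] A →
      ∫⁻ x in A, ‖polarWeight u g x‖ₑ ^ 2 ∂μ = ∫⁻ x in A, {x | 0 < g x}.indicator 1 x ∂μ := by
  intro A hA
  have hS : MeasurableSet[m] {x | 0 < g x} := hgm measurableSet_Ioi
  set φ : X → ℝ≥0∞ := A.indicator ({x | 0 < g x}.indicator fun x => (g x)⁻¹)
  calc ∫⁻ x in A, ‖polarWeight u g x‖ₑ ^ 2 ∂μ = ∫⁻ x, ‖u x‖ₑ ^ 2 * φ x ∂μ := by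
        rw [← lintegral_indicator (hm A hA)]
        congr 1 with x
        by_cases hxA : x ∈ A <;> by_cases hxS : 0 < g x <;>
          simp [φ, enorm_polarWeight_sq, hxA, hxS]
    _ = ∫⁻ x, g x * φ x ∂μ :=
        lintegral_mul_eq_of_forall_setLIntegral_eq hm (by fun_prop) (hgm.mono hm le_rfl) hg
          ((hgm.inv.indicator hS).indicator hA)
    _ = ∫⁻ x in A, {x | 0 < g x}.indicator 1 x ∂μ := by
        rw [← lintegral_indicator (hm A hA)]
        refine lintegral_congr_ae ?_
        filter_upwards [hg_fin] with x hx
        by_cases hxA : x ∈ A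
        · by_cases hxS : 0 < g x
          · simp [φ, hxA, hxS, ENNReal.mul_inv_cancel hxS.ne' hx.ne]
          · simp [φ, hxA, hxS]
        · simp [φ, hxA]

end ConditionalWeight

theorem stmt10_general (m : MeasurableSpace X) [m0 : MeasurableSpace X] (hm : m ≤ m0)
    (μ : Measure X) [SigmaFinite (μ.trim hm)]
    (u : X → ℂ) (hu : Measurable u)
    (g : X → ℝ≥0∞) (hgm : Measurable[m] g)
    (hg : ∀ A : Set X, MeasurableSet[m] A →
      ∫⁻ x in A, (‖u x‖₊ : ℝ≥0∞) ^ 2 ∂μ = ∫⁻ x in A, g x ∂μ)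
    (hgfin : ∀ᵐ x ∂μ, g x < ⊤)
    (f gf : X → ℂ) (hgf : IsWCE m μ u f gf) :
    letI S : Set X := {x | 0 < g x}
    letI utilde : X → ℂ := S.indicator fun x => u x * (Real.sqrt ((g x).toReal) : ℂ)⁻¹
    letI h : X → ℂ :=
      S.indicator fun x => (starRingEnd ℂ) (u x) * (Real.sqrt ((g x).toReal) : ℂ)⁻¹ * gf x
    MemLp h 2 μ ∧
    (∫⁻ x, (‖h x‖₊ : ℝ≥0∞) ^ 2 ∂μ = ∫⁻ x, (‖gf x‖₊ : ℝ≥0∞) ^ 2 ∂μ) ∧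
    ∃ k : X → ℂ, IsWCE m μ utilde h k ∧ k =ᵐ[μ] gf := by
  rw [indicator_conj_mul_eq_conj_polarWeight_mul]
  have hS : MeasurableSet[m] {x | 0 < g x} := hgm measurableSet_Ioi
  have hũ : Measurable (polarWeight u g) := measurable_polarWeight hu (hgm.mono hm le_rfl)
  have hũS := setLIntegral_enorm_polarWeight_sq hm hu hgm hg hgfin
  have hgfS : ∀ᵐ x ∂μ, x ∉ {x | 0 < g x} → gf x = 0 :=
    hgf.ae_eq_zero_of_ae_eq_zero hm hS (ae_eq_zero_of_forall_setLIntegral_enorm_sq_eq hm hu hgm hg)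
  have hnorm := lintegral_enorm_conj_mul_sq_eq hm hũ hS hũS hgf.1 hgfS
  have hmeas : AEStronglyMeasurable (fun x => conj (polarWeight u g x) * gf x) μ :=
    (Complex.continuous_conj.comp_aestronglyMeasurable hũ.aestronglyMeasurable).mul
      (hgf.1.mono hm).aestronglyMeasurable
  refine ⟨⟨hmeas, (eLpNorm_two_eq_of_lintegral_enorm_sq_eq hnorm).trans_lt hgf.2.1.2⟩,
    hnorm, gf,
    ⟨hgf.1, hgf.2.1, fun _ hA => setIntegral_mul_conj_mul_eq hm hũ hS hũS hgf.1 hgfS hA.1⟩, .rfl⟩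

/-- With `E(|u|²) < ∞` a.e., `S = {E(|u|²) > 0}` and
`ũ = u·E(|u|²)^{-1/2}·χ_S`, for every `f ∈ D(EM_u)` the function
`h = ū·E(|u|²)^{-1/2}·χ_S·(EM_u f)` is in `L²(μ)` with `∫|h|² = ∫|EM_u f|²`, `h ∈ D(EM_ũ)`,
and `EM_ũ h = EM_u f` a.e. -/
theorem stmt10 (m : MeasurableSpace X) [m0 : MeasurableSpace X] (hm : m ≤ m0)
    (μ : Measure X) [SigmaFinite μ] [SigmaFinite (μ.trim hm)]
    (u : X → ℂ) (hu : Measurable u)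
    (g : X → ℝ≥0∞) (hgm : Measurable[m] g)
    (hg : ∀ A : Set X, MeasurableSet[m] A →
      ∫⁻ x in A, (‖u x‖₊ : ℝ≥0∞) ^ 2 ∂μ = ∫⁻ x in A, g x ∂μ)
    (hgfin : ∀ᵐ x ∂μ, g x < ⊤)
    (f gf : X → ℂ) (hf : MemLp f 2 μ) (hgf : IsWCE m μ u f gf) :
    letI S : Set X := {x | 0 < g x}
    letI utilde : X → ℂ := S.indicator fun x => u x * (Real.sqrt ((g x).toReal) : ℂ)⁻¹
    letI h : X → ℂ :=
      S.indicator fun x => (starRingEnd ℂ) (u x) * (Real.sqrt ((g x).toReal) : ℂ)⁻¹ * gf x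
    MemLp h 2 μ ∧
    (∫⁻ x, (‖h x‖₊ : ℝ≥0∞) ^ 2 ∂μ = ∫⁻ x, (‖gf x‖₊ : ℝ≥0∞) ^ 2 ∂μ) ∧
    ∃ k : X → ℂ, IsWCE m μ utilde h k ∧ k =ᵐ[μ] gf :=
  stmt10_general m (m0 := m0) hm μ u hu g hgm hg hgfin f gf hgf
end
end

section
/- Assume E(|u|²) < ∞ μ-a.e. and let v = E(u). If for every f ∈ D(EM_u) with E(|u|²)·(EM_u f) ∈ L²(μ) one has E(|u|²)·(EM_u f) = ū·v·(EM_u f) μ-a.e. (i.e., EM_u|EM_u|² ⊆ |EM_u|²EM_u, quasinormality of EM_u), then ū·v = E(|u|²) μ-a.e. on the set {x : v(x) ≠ 0}. -/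
open MeasureTheory Filter ENNReal NNReal

noncomputable section

variable {X : Type*}

/-!
Test the quasinormality inclusion on `f = 1_A`, where `A ∈ 𝒜` has finite measure and `E(|u|²)`
and `v` are bounded on `A`: then `EM_u 1_A = 1_A · v`, so `E(|u|²) · v = ū · v · v` a.e. on `A`,
and `v` cancels on `A ∩ {v ≠ 0}`. Since `μ|_𝒜` is σ-finite and `E(|u|²)`, `v` are finite a.e.,
countably many such `A` cover `X` up to a null set.
-/

open ComplexConjugate

theorem exists_mem_spanningSets_and_le {_ : MeasurableSpace X} (ν : Measure X) [SigmaFinite ν]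
    (x : X) {a : ℝ≥0∞} (ha : a ≠ ∞) : ∃ n : ℕ, x ∈ spanningSets ν n ∧ a ≤ n := by
  obtain ⟨k, hk⟩ := ENNReal.exists_nat_gt ha
  refine ⟨max (spanningSetsIndex ν x) k, ?_, ?_⟩
  · exact monotone_spanningSets ν (le_max_left _ _) (mem_spanningSetsIndex ν x)
  · exact hk.le.trans (by exact_mod_cast le_max_right _ _)

theorem memLp_indicator_of_norm_le {E : Type*} [NormedAddCommGroup E] [MeasurableSpace X]
    {μ : Measure X} {p : ℝ≥0∞} {s : Set X} {f : X → E} (hs : MeasurableSet s) (hμs : μ s ≠ ∞)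
    (hf : AEStronglyMeasurable f μ) {C : ℝ} (hC : ∀ x ∈ s, ‖f x‖ ≤ C) :
    MemLp (s.indicator f) p μ := by
  have : IsFiniteMeasure (μ.restrict s) := ⟨by simpa using hμs.lt_top⟩
  exact (memLp_indicator_iff_restrict hs).2 <|
    MemLp.of_bound hf.restrict C (ae_restrict_of_forall_mem hs hC)

/-- Quasinormality `EM_u|EM_u|² ⊆ |EM_u|²EM_u` in the pointwise form of the paper, with
`g = E(|u|²)`, `v = E(u)` and `gf = EM_u f`. -/
def IsQuasinormalEM (m : MeasurableSpace X) [MeasurableSpace X] (μ : Measure X)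
    (u : X → ℂ) (g : X → ℝ≥0∞) (v : X → ℂ) : Prop :=
  ∀ f gf : X → ℂ, MemLp f 2 μ → IsWCE m μ u f gf →
    MemLp (fun x => ((g x).toReal : ℂ) * gf x) 2 μ →
    (fun x => ((g x).toReal : ℂ) * gf x) =ᵐ[μ] fun x => conj (u x) * v x * gf x

section

variable {m : MeasurableSpace X} [m0 : MeasurableSpace X] {μ : Measure X} {u : X → ℂ}

theorem Admissible.inter {A B : Set X} (hB : Admissible m μ u B) (hA : MeasurableSet[m] A) :
    Admissible m μ u (B ∩ A) :=
  ⟨hB.1.inter hA, lt_of_le_of_lt (add_le_add (measure_mono Set.inter_subset_left)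
    (lintegral_mono_set Set.inter_subset_left)) hB.2⟩

theorem isWCE_indicator_one (hm : m ≤ m0) {v : X → ℂ} (hvm : StronglyMeasurable[m] v)
    (hv : ∀ A : Set X, Admissible m μ u A → ∫ x in A, u x ∂μ = ∫ x in A, v x ∂μ)
    {A : Set X} (hA : MeasurableSet[m] A) (hvA : MemLp (A.indicator v) 2 μ) :
    IsWCE m μ u (A.indicator 1) (A.indicator v) := by
  refine ⟨hvm.indicator hA, hvA, fun B hB => ?_⟩
  have hA0 : MeasurableSet A := hm _ hA
  calc ∫ x in B, u x * A.indicator 1 x ∂μ = ∫ x in B, A.indicator u x ∂μ := by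
        congr 1; funext x; by_cases hx : x ∈ A <;> simp [hx]
    _ = ∫ x in B ∩ A, u x ∂μ := setIntegral_indicator hA0
    _ = ∫ x in B ∩ A, v x ∂μ := hv _ (hB.inter hA)
    _ = ∫ x in B, A.indicator v x ∂μ := (setIntegral_indicator hA0).symm

theorem IsQuasinormalEM.ae_conj_mul_eq_on (hm : m ≤ m0) {g : X → ℝ≥0∞} {v : X → ℂ}
    (hqn : IsQuasinormalEM m μ u g v) (hgm : Measurable[m] g) (hvm : StronglyMeasurable[m] v)
    (hv : ∀ A : Set X, Admissible m μ u A → ∫ x in A, u x ∂μ = ∫ x in A, v x ∂μ)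
    {A : Set X} (hA : MeasurableSet[m] A) (hμA : μ A ≠ ∞) {c C : ℝ≥0}
    (hgA : ∀ x ∈ A, g x ≤ c) (hvA : ∀ x ∈ A, ‖v x‖₊ ≤ C) :
    ∀ᵐ x ∂μ, x ∈ A → v x ≠ 0 → conj (u x) * v x = ((g x).toReal : ℂ) := by
  have hA0 : MeasurableSet A := hm _ hA
  have hvA' : ∀ x ∈ A, ‖v x‖ ≤ C := fun x hx => hvA x hx
  have hgA' : ∀ x ∈ A, ‖((g x).toReal : ℂ)‖ ≤ c := fun x hx => by
    simpa using ENNReal.toReal_mono ENNReal.coe_ne_top (hgA x hx)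
  have hg_v : (fun x => ((g x).toReal : ℂ) * A.indicator v x) =
      A.indicator fun x => ((g x).toReal : ℂ) * v x := by
    funext x; exact (Set.indicator_mul_right A (fun x => ((g x).toReal : ℂ)) v).symm
  have hgv_meas : AEStronglyMeasurable (fun x => ((g x).toReal : ℂ) * v x) μ :=
    ((Complex.measurable_ofReal.comp (hgm.mono hm le_rfl).ennreal_toReal).stronglyMeasurable.mul
      (hvm.mono hm)).aestronglyMeasurable
  have hvL2 : MemLp (A.indicator v) 2 μ :=
    memLp_indicator_of_norm_le hA0 hμA (hvm.mono hm).aestronglyMeasurable hvA'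
  have hgvL2 : MemLp (fun x => ((g x).toReal : ℂ) * A.indicator v x) 2 μ := by
    rw [hg_v]
    refine memLp_indicator_of_norm_le hA0 hμA hgv_meas (C := c * C) fun x hx => ?_
    rw [norm_mul]
    exact mul_le_mul (hgA' x hx) (hvA' x hx) (norm_nonneg _) c.coe_nonneg
  have h1L2 : MemLp (A.indicator (1 : X → ℂ)) 2 μ := memLp_indicator_const 2 hA0 1 (Or.inr hμA)
  filter_upwards [hqn _ _ h1L2 (isWCE_indicator_one hm hvm hv hA hvL2) hgvL2] with x hx hxA hvx
  simp only [Set.indicator_of_mem hxA] at hx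
  exact mul_right_cancel₀ hvx hx.symm

end

theorem stmt15_general (m : MeasurableSpace X) [m0 : MeasurableSpace X] (hm : m ≤ m0)
    (μ : Measure X) [SigmaFinite (μ.trim hm)]
    (u : X → ℂ)
    (g : X → ℝ≥0∞) (hgm : Measurable[m] g)
    (hgfin : ∀ᵐ x ∂μ, g x < ⊤)
    (v : X → ℂ) (hvm : StronglyMeasurable[m] v)
    (hv : ∀ A : Set X, Admissible m μ u A → ∫ x in A, u x ∂μ = ∫ x in A, v x ∂μ)
    (hqn : ∀ f gf : X → ℂ, MemLp f 2 μ → IsWCE m μ u f gf →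
      MemLp (fun x => ((g x).toReal : ℂ) * gf x) 2 μ →
      (fun x => ((g x).toReal : ℂ) * gf x) =ᵐ[μ]
        fun x => (starRingEnd ℂ) (u x) * v x * gf x) :
    ∀ᵐ x ∂μ, v x ≠ 0 → (starRingEnd ℂ) (u x) * v x = ((g x).toReal : ℂ) := by
  set S : ℕ → Set X := fun n =>
    spanningSets (μ.trim hm) n ∩ {x | g x ≤ n} ∩ {x | ‖v x‖₊ ≤ n}
  have hS : ∀ n, MeasurableSet[m] (S n) := fun n =>
    ((measurableSet_spanningSets _ n).inter (hgm measurableSet_Iic)).inter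
      (hvm.nnnorm.measurable measurableSet_Iic)
  have hμS : ∀ n, μ (S n) ≠ ∞ := fun n =>
    (((measure_mono fun x hx => hx.1.1).trans (le_trim hm)).trans_lt
      (measure_spanningSets_lt_top _ n)).ne
  have hcover : ∀ᵐ x ∂μ, ∃ n, x ∈ S n := by
    filter_upwards [hgfin] with x hx
    obtain ⟨n, hxn, hn⟩ := exists_mem_spanningSets_and_le (μ.trim hm) x
      (a := g x + ‖v x‖₊) (by simpa using hx.ne)
    exact ⟨n, ⟨hxn, le_self_add.trans hn⟩, by exact_mod_cast le_add_self.trans hn⟩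
  have hS_eq : ∀ n, ∀ᵐ x ∂μ, x ∈ S n → v x ≠ 0 → conj (u x) * v x = ((g x).toReal : ℂ) :=
    fun n => IsQuasinormalEM.ae_conj_mul_eq_on hm hqn hgm hvm hv (hS n) (hμS n) (c := n) (C := n)
      (fun x hx => by exact_mod_cast hx.1.2) (fun x hx => hx.2)
  filter_upwards [ae_all_iff.2 hS_eq, hcover] with x hx ⟨n, hxn⟩
  exact hx n hxn

/-- With `E(|u|²) < ∞` a.e. and `v = E(u)`, if
`E(|u|²)·(EM_u f) = ū·v·(EM_u f)` a.e. for every `f ∈ D(EM_u)` with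
`E(|u|²)·(EM_u f) ∈ L²(μ)` (quasinormality of `EM_u`), then `ū·v = E(|u|²)` a.e. on
`{v ≠ 0}`. -/
theorem stmt15 (m : MeasurableSpace X) [m0 : MeasurableSpace X] (hm : m ≤ m0)
    (μ : Measure X) [SigmaFinite μ] [SigmaFinite (μ.trim hm)]
    (u : X → ℂ) (hu : Measurable u)
    (g : X → ℝ≥0∞) (hgm : Measurable[m] g)
    (hg : ∀ A : Set X, MeasurableSet[m] A →
      ∫⁻ x in A, (‖u x‖₊ : ℝ≥0∞) ^ 2 ∂μ = ∫⁻ x in A, g x ∂μ)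
    (hgfin : ∀ᵐ x ∂μ, g x < ⊤)
    (v : X → ℂ) (hvm : StronglyMeasurable[m] v)
    (hv : ∀ A : Set X, Admissible m μ u A → ∫ x in A, u x ∂μ = ∫ x in A, v x ∂μ)
    (hqn : ∀ f gf : X → ℂ, MemLp f 2 μ → IsWCE m μ u f gf →
      MemLp (fun x => ((g x).toReal : ℂ) * gf x) 2 μ →
      (fun x => ((g x).toReal : ℂ) * gf x) =ᵐ[μ]
        fun x => (starRingEnd ℂ) (u x) * v x * gf x) :
    ∀ᵐ x ∂μ, v x ≠ 0 → (starRingEnd ℂ) (u x) * v x = ((g x).toReal : ℂ) :=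
  stmt15_general m (m0 := m0) hm μ u g hgm hgfin v hvm hv hqn
end
end
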